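/- arXiv:2504.06913 — 3 statements merged into one kernel-verified Lean document; each statement's English description precedes it below -/
import Mathlib

section
/- Increasing differences (supermodularity, Proposition 1): for every agent i, if (x̃',ỹ'), (x̃,ỹ) ∈ {−1,+1}×[−1,+1] satisfy x̃' ≥ x̃ and ỹ' ≥ ỹ, and states z' = (x',y'), z = (x,y) satisfy x'_j ≥ x_j and y'_j ≥ y_j for all j ∈ V, then u_i((x̃',ỹ'), z') − u_i((x̃,ỹ), z') ≥ u_i((x̃',ỹ'), z) − u_i((x̃,ỹ), z). -/
/-- Utility of agent `i` choosing action `xc ∈ {-1,1}` and opinion `yc ∈ [-1,1]`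
against the state `(x, y)`. -/
noncomputable def util (n : ℕ) (A W : Fin n → Fin n → ℝ) (l b : Fin n → ℝ)
    (i : Fin n) (xc yc : ℝ) (x y : Fin n → ℝ) : ℝ :=
  l i * (1 - b i) / 2 *
      ∑ j, A i j * ((1 - x j) * (1 - xc) + (1 + x j) * (1 + xc))
    - b i * (1 - l i) * ∑ j, W i j * (yc - y j) ^ 2
    - l i * b i * (xc - yc) ^ 2

/-- The quantity `δ_i(z)` determining the best-response action. -/
noncomputable def delta (n : ℕ) (A W : Fin n → Fin n → ℝ) (l b : Fin n → ℝ)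
    (i : Fin n) (x y : Fin n → ℝ) : ℝ :=
  2 * b i * (1 - l i) * ∑ j, W i j * y j + (1 - b i) * ∑ j, A i j * x j

/-- Proposition 1, increasing differences / supermodularity. -/
theorem increasing_differences
    (n : ℕ) (A W : Fin n → Fin n → ℝ) (l b : Fin n → ℝ)
    (hA0 : ∀ i j, 0 ≤ A i j) (hA1 : ∀ i j, A i j ≤ 1) (hArow : ∀ i, ∑ j, A i j = 1)
    (hW0 : ∀ i j, 0 ≤ W i j) (hW1 : ∀ i j, W i j ≤ 1) (hWrow : ∀ i, ∑ j, W i j = 1)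
    (hl : ∀ i, 0 < l i ∧ l i ≤ 1) (hb : ∀ i, 0 < b i ∧ b i ≤ 1)
    (i : Fin n)
    (xc' yc' xc yc : ℝ)
    (hxc' : xc' = -1 ∨ xc' = 1) (hxc : xc = -1 ∨ xc = 1)
    (hyc' : yc' ∈ Set.Icc (-1 : ℝ) 1) (hyc : yc ∈ Set.Icc (-1 : ℝ) 1)
    (hxcle : xc ≤ xc') (hycle : yc ≤ yc')
    (x y x' y' : Fin n → ℝ)
    (hx : ∀ j, x j = -1 ∨ x j = 1) (hx' : ∀ j, x' j = -1 ∨ x' j = 1)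
    (hy : ∀ j, y j ∈ Set.Icc (-1 : ℝ) 1) (hy' : ∀ j, y' j ∈ Set.Icc (-1 : ℝ) 1)
    (hxle : ∀ j, x j ≤ x' j) (hyle : ∀ j, y j ≤ y' j) :
    util n A W l b i xc' yc' x' y' - util n A W l b i xc yc x' y' ≥
      util n A W l b i xc' yc' x y - util n A W l b i xc yc x y := by
  have hSx : ∑ j, A i j * x j ≤ ∑ j, A i j * x' j :=
    Finset.sum_le_sum fun j _ => mul_le_mul_of_nonneg_left (hxle j) (hA0 i j)
  have hSy : ∑ j, W i j * y j ≤ ∑ j, W i j * y' j :=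
    Finset.sum_le_sum fun j _ => mul_le_mul_of_nonneg_left (hyle j) (hW0 i j)
  have key : ∀ (xv yv : Fin n → ℝ) (xcv ycv : ℝ),
      util n A W l b i xcv ycv xv yv =
        l i * (1 - b i) / 2 * (2 + 2 * xcv * ∑ j, A i j * xv j)
        - b i * (1 - l i) * (ycv ^ 2 - 2 * ycv * ∑ j, W i j * yv j + ∑ j, W i j * (yv j) ^ 2)
        - l i * b i * (xcv - ycv) ^ 2 := by
    intro xv yv xcv ycv
    unfold util
    have h1 : ∑ j, A i j * ((1 - xv j) * (1 - xcv) + (1 + xv j) * (1 + xcv))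
        = 2 * ∑ j, A i j + 2 * xcv * ∑ j, A i j * xv j := by
      rw [Finset.mul_sum, Finset.mul_sum, ← Finset.sum_add_distrib]
      exact Finset.sum_congr rfl fun j _ => by ring
    have h2 : ∑ j, W i j * (ycv - yv j) ^ 2
        = ycv ^ 2 * ∑ j, W i j - 2 * ycv * ∑ j, W i j * yv j + ∑ j, W i j * (yv j) ^ 2 := by
      rw [Finset.mul_sum, Finset.mul_sum, ← Finset.sum_sub_distrib, ← Finset.sum_add_distrib]
      exact Finset.sum_congr rfl fun j _ => by ring
    rw [h1, h2, hArow i, hWrow i]; ring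
  rw [key, key, key, key]
  have hC : 0 ≤ l i * (1 - b i) := mul_nonneg (hl i).1.le (by linarith [(hb i).2])
  have hD : 0 ≤ b i * (1 - l i) := mul_nonneg (hb i).1.le (by linarith [(hl i).2])
  nlinarith [mul_nonneg (mul_nonneg hC (sub_nonneg.2 hxcle)) (sub_nonneg.2 hSx),
    mul_nonneg (mul_nonneg hD (sub_nonneg.2 hycle)) (sub_nonneg.2 hSy)]
end

section
/- Best-response characterization (Proposition 2): for every agent i and every state z = (x,y) ∈ {−1,+1}^n × [−1,+1]^n, letting w̄_i = Σ_{j∈V} w_ij y_j, the set of maximizers of (x̃,ỹ) ↦ u_i((x̃,ỹ), z) over {−1,+1}×[−1,+1] equals: the singleton {(+1, (1−λ_i)w̄_i + λ_i)} if δ_i(z) > 0; the singleton {(−1, (1−λ_i)w̄_i − λ_i)} if δ_i(z) < 0; and exactly the two-point set {(+1, (1−λ_i)w̄_i + λ_i), (−1, (1−λ_i)w̄_i − λ_i)} if δ_i(z) = 0. -/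
/-- The set of maximizers of the utility of agent i over the choice domain. -/
def MaxSet (n : ℕ) (A W : Fin n → Fin n → ℝ) (l b : Fin n → ℝ)
    (i : Fin n) (x y : Fin n → ℝ) : Set (ℝ × ℝ) :=
  {p | (p.1 = -1 ∨ p.1 = 1) ∧ p.2 ∈ Set.Icc (-1 : ℝ) 1 ∧
    ∀ q : ℝ × ℝ, (q.1 = -1 ∨ q.1 = 1) → q.2 ∈ Set.Icc (-1 : ℝ) 1 →
      util n A W l b i q.1 q.2 x y ≤ util n A W l b i p.1 p.2 x y}

/-- Proposition 2, best-response characterization. -/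
theorem best_response_characterization
    (n : ℕ) (A W : Fin n → Fin n → ℝ) (l b : Fin n → ℝ)
    (hA0 : ∀ i j, 0 ≤ A i j) (hA1 : ∀ i j, A i j ≤ 1) (hArow : ∀ i, ∑ j, A i j = 1)
    (hW0 : ∀ i j, 0 ≤ W i j) (hW1 : ∀ i j, W i j ≤ 1) (hWrow : ∀ i, ∑ j, W i j = 1)
    (hl : ∀ i, 0 < l i ∧ l i ≤ 1) (hb : ∀ i, 0 < b i ∧ b i ≤ 1)
    (i : Fin n) (x y : Fin n → ℝ)
    (hx : ∀ j, x j = -1 ∨ x j = 1) (hy : ∀ j, y j ∈ Set.Icc (-1 : ℝ) 1) :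
    (0 < delta n A W l b i x y →
      MaxSet n A W l b i x y =
        {((1 : ℝ), (1 - l i) * (∑ j, W i j * y j) + l i)}) ∧
    (delta n A W l b i x y < 0 →
      MaxSet n A W l b i x y =
        {((-1 : ℝ), (1 - l i) * (∑ j, W i j * y j) - l i)}) ∧
    (delta n A W l b i x y = 0 →
      MaxSet n A W l b i x y =
        {((1 : ℝ), (1 - l i) * (∑ j, W i j * y j) + l i),
         ((-1 : ℝ), (1 - l i) * (∑ j, W i j * y j) - l i)} ∧
      ((1 : ℝ), (1 - l i) * (∑ j, W i j * y j) + l i) ≠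
        ((-1 : ℝ), (1 - l i) * (∑ j, W i j * y j) - l i)) := by
  obtain ⟨hl0, hl1⟩ := hl i
  obtain ⟨hb0, hb1⟩ := hb i
  set wb := ∑ j, W i j * y j with hwb
  set ab := ∑ j, A i j * x j with habd
  set S := ∑ j, W i j * (y j) ^ 2 with hSd
  -- bounds on wb
  have hwble : wb ≤ 1 := by
    rw [hwb]
    calc (∑ j, W i j * y j) ≤ ∑ j, W i j :=
          Finset.sum_le_sum fun j _ => by nlinarith [(hy j).1, (hy j).2, hW0 i j]
      _ = 1 := hWrow i
  have hwbge : (-1 : ℝ) ≤ wb := by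
    rw [hwb]
    calc (-1 : ℝ) = ∑ j, -(W i j) := by
          simp [Finset.sum_neg_distrib, hWrow i]
      _ ≤ ∑ j, W i j * y j :=
          Finset.sum_le_sum fun j _ => by nlinarith [(hy j).1, hW0 i j]
  set m1 := (1 - l i) * wb + l i with hm1d
  set m2 := (1 - l i) * wb - l i with hm2d
  have hm1 : m1 ∈ Set.Icc (-1 : ℝ) 1 := ⟨by rw [hm1d]; nlinarith, by rw [hm1d]; nlinarith⟩
  have hm2 : m2 ∈ Set.Icc (-1 : ℝ) 1 := ⟨by rw [hm2d]; nlinarith, by rw [hm2d]; nlinarith⟩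
  -- sum simplifications
  have hsumA : ∀ xc : ℝ, (∑ j, A i j * ((1 - x j) * (1 - xc) + (1 + x j) * (1 + xc)))
      = 2 + 2 * xc * ab := by
    intro xc
    rw [habd]
    have h1 : ∀ j ∈ Finset.univ, A i j * ((1 - x j) * (1 - xc) + (1 + x j) * (1 + xc))
        = 2 * A i j + 2 * xc * (A i j * x j) := fun j _ => by ring
    rw [Finset.sum_congr rfl h1, Finset.sum_add_distrib, ← Finset.mul_sum, ← Finset.mul_sum,
      hArow i]
    ring
  have hsumW : ∀ yc : ℝ, (∑ j, W i j * (yc - y j) ^ 2) = yc ^ 2 - 2 * yc * wb + S := by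
    intro yc
    rw [hwb, hSd]
    have h1 : ∀ j ∈ Finset.univ, W i j * (yc - y j) ^ 2
        = (yc ^ 2 * W i j + (-(2 * yc)) * (W i j * y j)) + W i j * (y j) ^ 2 := fun j _ => by ring
    rw [Finset.sum_congr rfl h1, Finset.sum_add_distrib, Finset.sum_add_distrib,
      ← Finset.mul_sum, ← Finset.mul_sum, hWrow i]
    ring
  -- utility decomposition
  have hU : ∀ xc yc : ℝ, (xc = -1 ∨ xc = 1) →
      util n A W l b i xc yc x y =
        ((l i * (1 - b i) - b i * (1 - l i) * S - l i * b i)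
          + l i * (1 - b i) * ab * xc
          + b i * ((1 - l i) * wb + l i * xc) ^ 2)
        - b i * (yc - ((1 - l i) * wb + l i * xc)) ^ 2 := by
    intro xc yc hxc
    unfold util
    rw [hsumA xc, hsumW yc]
    rcases hxc with rfl | rfl <;> ring
  have hU1 : ∀ yc : ℝ, util n A W l b i 1 yc x y =
      util n A W l b i 1 m1 x y - b i * (yc - m1) ^ 2 := by
    intro yc
    rw [hU 1 yc (Or.inr rfl), hU 1 m1 (Or.inr rfl), hm1d]
    ring
  have hU2 : ∀ yc : ℝ, util n A W l b i (-1) yc x y =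
      util n A W l b i (-1) m2 x y - b i * (yc - m2) ^ 2 := by
    intro yc
    rw [hU (-1) yc (Or.inl rfl), hU (-1) m2 (Or.inl rfl), hm2d]
    ring
  have hdelta : delta n A W l b i x y = 2 * b i * (1 - l i) * wb + (1 - b i) * ab := by
    unfold delta
    rw [hwb, habd]
  have hdiffeq : util n A W l b i 1 m1 x y - util n A W l b i (-1) m2 x y
      = 2 * l i * delta n A W l b i x y := by
    rw [hU 1 m1 (Or.inr rfl), hU (-1) m2 (Or.inl rfl), hdelta, hm1d, hm2d]
    ring
  -- helper to extract the opinion from the maximality condition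
  have hsqzero : ∀ c m : ℝ, b i * (c - m) ^ 2 ≤ 0 → c = m := by
    intro c m h
    have h2 : (c - m) ^ 2 = 0 := le_antisymm (by nlinarith [sq_nonneg (c - m)]) (sq_nonneg _)
    have h3 : c - m = 0 := by
      have := pow_eq_zero_iff (n := 2) (by norm_num) |>.mp h2
      exact this
    linarith
  refine ⟨?_, ?_, ?_⟩
  · -- δ > 0
    intro hd
    have hgap : util n A W l b i (-1) m2 x y < util n A W l b i 1 m1 x y := by
      have h2 := mul_pos (show (0:ℝ) < 2 * l i by linarith) hd
      linarith [hdiffeq]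
    ext ⟨pa, pb⟩
    simp only [MaxSet, Set.mem_setOf_eq, Set.mem_singleton_iff, Prod.mk.injEq]
    constructor
    · rintro ⟨hpa, hpb, hmax⟩
      have h1 := hmax (1, m1) (Or.inr rfl) hm1
      rcases hpa with rfl | rfl
      · exfalso
        have h2 := hU2 pb
        linarith [mul_nonneg hb0.le (sq_nonneg (pb - m2))]
      · have h2 := hU1 pb
        refine ⟨rfl, hsqzero pb m1 (by linarith)⟩
    · rintro ⟨rfl, rfl⟩
      refine ⟨Or.inr rfl, hm1, ?_⟩
      rintro ⟨qa, qb⟩ hqa hqb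
      rcases hqa with rfl | rfl
      · have := hU2 qb
        linarith [mul_nonneg hb0.le (sq_nonneg (qb - m2))]
      · have := hU1 qb
        linarith [mul_nonneg hb0.le (sq_nonneg (qb - m1))]
  · -- δ < 0
    intro hd
    have hgap : util n A W l b i 1 m1 x y < util n A W l b i (-1) m2 x y := by
      have h2 := mul_pos (show (0:ℝ) < 2 * l i by linarith)
        (show (0:ℝ) < -(delta n A W l b i x y) by linarith)
      linarith [hdiffeq, mul_neg (2 * l i) (delta n A W l b i x y)]
    ext ⟨pa, pb⟩
    simp only [MaxSet, Set.mem_setOf_eq, Set.mem_singleton_iff, Prod.mk.injEq]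
    constructor
    · rintro ⟨hpa, hpb, hmax⟩
      have h1 := hmax (-1, m2) (Or.inl rfl) hm2
      rcases hpa with rfl | rfl
      · have h2 := hU2 pb
        refine ⟨rfl, hsqzero pb m2 (by linarith)⟩
      · exfalso
        have h2 := hU1 pb
        linarith [mul_nonneg hb0.le (sq_nonneg (pb - m1))]
    · rintro ⟨rfl, rfl⟩
      refine ⟨Or.inl rfl, hm2, ?_⟩
      rintro ⟨qa, qb⟩ hqa hqb
      rcases hqa with rfl | rfl
      · have := hU2 qb
        linarith [mul_nonneg hb0.le (sq_nonneg (qb - m2))]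
      · have := hU1 qb
        linarith [mul_nonneg hb0.le (sq_nonneg (qb - m1))]
  · -- δ = 0
    intro hd
    have heq : util n A W l b i 1 m1 x y = util n A W l b i (-1) m2 x y := by
      have h2 := hdiffeq
      rw [hd, mul_zero] at h2
      linarith
    constructor
    · ext ⟨pa, pb⟩
      simp only [MaxSet, Set.mem_setOf_eq, Set.mem_insert_iff, Set.mem_singleton_iff,
        Prod.mk.injEq]
      constructor
      · rintro ⟨hpa, hpb, hmax⟩
        have h1 := hmax (1, m1) (Or.inr rfl) hm1
        rcases hpa with rfl | rfl
        · have h2 := hU2 pb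
          exact Or.inr ⟨rfl, hsqzero pb m2 (by linarith)⟩
        · have h2 := hU1 pb
          exact Or.inl ⟨rfl, hsqzero pb m1 (by linarith)⟩
      · rintro (⟨rfl, rfl⟩ | ⟨rfl, rfl⟩)
        · refine ⟨Or.inr rfl, hm1, ?_⟩
          rintro ⟨qa, qb⟩ hqa hqb
          rcases hqa with rfl | rfl
          · have := hU2 qb
            linarith [mul_nonneg hb0.le (sq_nonneg (qb - m2))]
          · have := hU1 qb
            linarith [mul_nonneg hb0.le (sq_nonneg (qb - m1))]
        · refine ⟨Or.inl rfl, hm2, ?_⟩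
          rintro ⟨qa, qb⟩ hqa hqb
          rcases hqa with rfl | rfl
          · have := hU2 qb
            linarith [mul_nonneg hb0.le (sq_nonneg (qb - m2))]
          · have := hU1 qb
            linarith [mul_nonneg hb0.le (sq_nonneg (qb - m1))]
    · intro h
      have h1 : (1 : ℝ) = -1 := congrArg Prod.fst h
      norm_num at h1
end

section
/- Stationary distribution of the exploration chain (part of Theorem 4): with P_ε as defined on the up-closed family 𝒞̄, P_ε is a stochastic matrix on 𝒞̄ (nonnegative entries with each row summing to 1), and the probability distribution μ_ε on 𝒞̄ given by μ_ε(C) = ε^{|C|} / K_ε, where K_ε = Σ_{D ∈ 𝒞̄} ε^{|D|}, satisfies the detailed balance condition μ_ε(A) P_ε(A,B) = μ_ε(B) P_ε(B,A) for all A, B ∈ 𝒞̄; in particular Σ_{A ∈ 𝒞̄} μ_ε(A) P_ε(A,B) = μ_ε(B) for all B ∈ 𝒞̄, i.e., μ_ε is an invariant (stationary) distribution of the chain. -/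
/-- Number of admissible configurations reachable from `A` by removing one node. -/
def ncAdm {α : Type*} [DecidableEq α] (F : Finset (Finset α)) (A : Finset α) : ℕ :=
  (A.filter (fun r => A.erase r ∈ F)).card

/-- Transition probabilities of the exploration Markov chain on the family `F`
of admissible control sets. -/
noncomputable def Pstep {α : Type*} [DecidableEq α] [Fintype α]
    (F : Finset (Finset α)) (ε : ℝ) (A B : Finset α) : ℝ :=
  if B ∈ F ∧ B ⊂ A ∧ B.card + 1 = A.card then 1 / (Fintype.card α : ℝ)
  else if A ⊂ B ∧ B.card = A.card + 1 then ε / (Fintype.card α : ℝ)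
  else if B = A then
    1 - (ε * ((Fintype.card α : ℝ) - (A.card : ℝ)) + (ncAdm F A : ℝ)) /
      (Fintype.card α : ℝ)
  else 0

/-!
The chain only moves between sets `B ⋖ A` differing in one element, and the ratio
`P(A, B) / P(B, A) = ε` of an up-move `A ⋖ B` matches `ε ^ |B| / ε ^ |A|`, which is detailed
balance for `C ↦ ε ^ |C|`. In an up-closed family every one of the `n - |A|` up-moves from `A`
stays admissible, while the admissible down-moves are counted by `ncAdm F A`, so the holding
probability `P(A, A)` is exactly what makes the rows sum to one. Detailed balance together with
stochasticity gives stationarity.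
-/

open Finset

theorem Finset.ssubset_and_card_add_one_iff_covBy {α : Type*} [DecidableEq α]
    {s t : Finset α} : s ⊂ t ∧ s.card + 1 = t.card ↔ s ⋖ t := by
  constructor
  · rintro ⟨hst, hcard⟩
    refine covBy_iff_card_sdiff_eq_one.2 ⟨hst.subset, ?_⟩
    rw [card_sdiff_of_subset hst.subset]
    omega
  · intro h
    obtain ⟨a, ha, rfl⟩ := h.exists_finset_insert
    exact ⟨ssubset_insert ha, (card_insert_of_notMem ha).symm⟩

instance Finset.decidableRelCovBy {α : Type*} [DecidableEq α] :
    DecidableRel (α := Finset α) (· ⋖ ·) :=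
  fun _ _ => decidable_of_iff _ ssubset_and_card_add_one_iff_covBy

theorem Finset.sum_mul_eq_of_detailed_balance {ι R : Type*} [CommSemiring R] {s : Finset ι}
    {π : ι → R} {P : ι → ι → R} (hdb : ∀ a ∈ s, ∀ b ∈ s, π a * P a b = π b * P b a)
    (hrow : ∀ a ∈ s, ∑ b ∈ s, P a b = 1) {b : ι} (hb : b ∈ s) :
    ∑ a ∈ s, π a * P a b = π b := by
  calc ∑ a ∈ s, π a * P a b = ∑ a ∈ s, π b * P b a := sum_congr rfl fun a ha => hdb a ha b hb
    _ = π b := by rw [← mul_sum, hrow b hb, mul_one]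

section ExplorationChain

variable {α : Type*} [DecidableEq α] (F : Finset (Finset α))

theorem ncAdm_le_card (A : Finset α) : ncAdm F A ≤ A.card :=
  card_le_card (filter_subset _ _)

theorem filter_covBy_eq_image_erase (A : Finset α) :
    F.filter (· ⋖ A) = (A.filter fun r => A.erase r ∈ F).image A.erase := by
  ext B
  simp only [mem_filter, mem_image, covBy_iff_exists_erase]
  constructor
  · rintro ⟨hB, r, hr, rfl⟩
    exact ⟨r, ⟨hr, hB⟩, rfl⟩
  · rintro ⟨r, ⟨hr, hB⟩, rfl⟩
    exact ⟨hB, r, hr, rfl⟩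

theorem card_filter_covBy_eq_ncAdm (A : Finset α) : (F.filter (· ⋖ A)).card = ncAdm F A := by
  rw [filter_covBy_eq_image_erase, card_image_of_injOn ((erase_injOn A).mono (filter_subset _ _))]
  rfl

theorem filter_covBy_eq_image_insert [Fintype α] (hF : IsUpperSet (F : Set (Finset α)))
    {A : Finset α} (hA : A ∈ F) : F.filter (A ⋖ ·) = Aᶜ.image (insert · A) := by
  ext B
  simp only [mem_filter, mem_image, mem_compl, covBy_iff_exists_insert]
  constructor
  · rintro ⟨-, a, ha, rfl⟩
    exact ⟨a, ha, rfl⟩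
  · rintro ⟨a, ha, rfl⟩
    exact ⟨hF (subset_insert a A) hA, a, ha, rfl⟩

theorem card_filter_covBy_of_isUpperSet [Fintype α] (hF : IsUpperSet (F : Set (Finset α)))
    {A : Finset α} (hA : A ∈ F) : (F.filter (A ⋖ ·)).card = Fintype.card α - A.card := by
  rw [filter_covBy_eq_image_insert F hF hA, card_image_of_injOn (insert_inj_on' A), card_compl]

variable [Fintype α] (ε : ℝ) {A B : Finset α}

theorem Pstep_of_covBy_of_mem (hB : B ∈ F) (h : B ⋖ A) :
    Pstep F ε A B = 1 / Fintype.card α := by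
  rw [Pstep, if_pos ⟨hB, ssubset_and_card_add_one_iff_covBy.2 h⟩]

theorem Pstep_of_covBy (h : A ⋖ B) : Pstep F ε A B = ε / Fintype.card α := by
  have hup := ssubset_and_card_add_one_iff_covBy.2 h
  rw [Pstep, if_neg fun hdown => hup.1.asymm hdown.2.1, if_pos ⟨hup.1, hup.2.symm⟩]

theorem Pstep_self (A : Finset α) :
    Pstep F ε A A = 1 - (ε * ((Fintype.card α : ℝ) - A.card) + ncAdm F A) / Fintype.card α := by
  simp [Pstep]

theorem Pstep_of_not_covBy (hdown : ¬ B ⋖ A) (hup : ¬ A ⋖ B) (hne : B ≠ A) :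
    Pstep F ε A B = 0 := by
  rw [Pstep, if_neg fun h => hdown (ssubset_and_card_add_one_iff_covBy.1 h.2),
    if_neg fun h => hup (ssubset_and_card_add_one_iff_covBy.1 ⟨h.1, h.2.symm⟩), if_neg hne]

theorem Pstep_nonneg (hε₀ : 0 ≤ ε) (hε₁ : ε ≤ 1) (A B : Finset α) : 0 ≤ Pstep F ε A B := by
  have hA : (A.card : ℝ) ≤ Fintype.card α := by exact_mod_cast card_le_univ A
  have hnc : (ncAdm F A : ℝ) ≤ A.card := by exact_mod_cast ncAdm_le_card F A
  have hup : ε * ((Fintype.card α : ℝ) - A.card) ≤ (Fintype.card α : ℝ) - A.card :=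
    mul_le_of_le_one_left (sub_nonneg.2 hA) hε₁
  unfold Pstep
  split_ifs
  · positivity
  · positivity
  · exact sub_nonneg.2 (div_le_one_of_le₀ (by linarith) (Nat.cast_nonneg _))
  · exact le_rfl

theorem Pstep_eq_add_ite (hB : B ∈ F) :
    Pstep F ε A B = (if B ⋖ A then 1 / (Fintype.card α : ℝ) else 0) +
      (if A ⋖ B then ε / (Fintype.card α : ℝ) else 0) +
      (if B = A then Pstep F ε A A else 0) := by
  by_cases hdown : B ⋖ A
  · rw [Pstep_of_covBy_of_mem F ε hB hdown, if_pos hdown, if_neg fun hup => hdown.lt.asymm hup.lt,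
      if_neg hdown.lt.ne]
    ring
  by_cases hup : A ⋖ B
  · rw [Pstep_of_covBy F ε hup, if_neg hdown, if_pos hup, if_neg hup.lt.ne']
    ring
  by_cases hne : B = A
  · subst hne
    simp
  · rw [Pstep_of_not_covBy F ε hdown hup hne, if_neg hdown, if_neg hup, if_neg hne]
    ring

theorem sum_Pstep_eq_one (hF : IsUpperSet (F : Set (Finset α))) (hA : A ∈ F) :
    ∑ B ∈ F, Pstep F ε A B = 1 := by
  have hcard : ((Fintype.card α - A.card : ℕ) : ℝ) = Fintype.card α - A.card :=
    Nat.cast_sub (card_le_univ A)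
  rw [sum_congr rfl fun B hB => Pstep_eq_add_ite F ε hB, sum_add_distrib, sum_add_distrib,
    ← sum_filter, ← sum_filter, sum_ite_eq' F A, if_pos hA, sum_const, sum_const,
    card_filter_covBy_eq_ncAdm, card_filter_covBy_of_isUpperSet F hF hA, Pstep_self, nsmul_eq_mul,
    nsmul_eq_mul, hcard]
  ring

theorem pow_card_mul_Pstep_comm (hA : A ∈ F) (hB : B ∈ F) :
    ε ^ A.card * Pstep F ε A B = ε ^ B.card * Pstep F ε B A := by
  have down_up : ∀ {A B : Finset α}, B ∈ F → B ⋖ A →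
      ε ^ A.card * Pstep F ε A B = ε ^ B.card * Pstep F ε B A := fun hB h => by
    rw [Pstep_of_covBy_of_mem F ε hB h, Pstep_of_covBy F ε h,
      ← (ssubset_and_card_add_one_iff_covBy.2 h).2, pow_succ]
    ring
  by_cases hdown : B ⋖ A
  · exact down_up hB hdown
  by_cases hup : A ⋖ B
  · exact (down_up hA hup).symm
  by_cases hne : B = A
  · rw [hne]
  · rw [Pstep_of_not_covBy F ε hdown hup hne, Pstep_of_not_covBy F ε hup hdown (Ne.symm hne), mul_zero,
      mul_zero]

end ExplorationChain

theorem exploration_chain_stationary_general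
    {α : Type*} [DecidableEq α] [Fintype α]
    (F : Finset (Finset α))
    (hup : ∀ A ∈ F, ∀ B : Finset α, A ⊆ B → B ∈ F)
    (ε : ℝ) (hε : 0 < ε ∧ ε ≤ 1) :
    (∀ A ∈ F, ∀ B ∈ F, 0 ≤ Pstep F ε A B) ∧
    (∀ A ∈ F, ∑ B ∈ F, Pstep F ε A B = 1) ∧
    (∀ A ∈ F, ∀ B ∈ F,
      (ε ^ A.card / ∑ D ∈ F, ε ^ D.card) * Pstep F ε A B =
        (ε ^ B.card / ∑ D ∈ F, ε ^ D.card) * Pstep F ε B A) ∧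
    (∀ B ∈ F,
      ∑ A ∈ F, (ε ^ A.card / ∑ D ∈ F, ε ^ D.card) * Pstep F ε A B =
        ε ^ B.card / ∑ D ∈ F, ε ^ D.card) := by
  have hF : IsUpperSet (F : Set (Finset α)) := fun A B hAB hA => hup A hA B hAB
  have hrow : ∀ A ∈ F, ∑ B ∈ F, Pstep F ε A B = 1 := fun A hA => sum_Pstep_eq_one F ε hF hA
  have hdb : ∀ A ∈ F, ∀ B ∈ F,
      (ε ^ A.card / ∑ D ∈ F, ε ^ D.card) * Pstep F ε A B =
        (ε ^ B.card / ∑ D ∈ F, ε ^ D.card) * Pstep F ε B A := fun A hA B hB => by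
    rw [div_mul_eq_mul_div, div_mul_eq_mul_div, pow_card_mul_Pstep_comm F ε hA hB]
  exact ⟨fun A _ B _ => Pstep_nonneg F ε hε.1.le hε.2 A B, hrow, hdb,
    fun B hB => sum_mul_eq_of_detailed_balance hdb hrow hB⟩

/-- Theorem 4 part, stationary distribution of the exploration chain. -/
theorem exploration_chain_stationary
    {α : Type*} [DecidableEq α] [Fintype α] (hcard : 1 ≤ Fintype.card α)
    (F : Finset (Finset α)) (hne : F.Nonempty)
    (hup : ∀ A ∈ F, ∀ B : Finset α, A ⊆ B → B ∈ F)
    (ε : ℝ) (hε : 0 < ε ∧ ε ≤ 1) :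
    (∀ A ∈ F, ∀ B ∈ F, 0 ≤ Pstep F ε A B) ∧
    (∀ A ∈ F, ∑ B ∈ F, Pstep F ε A B = 1) ∧
    (∀ A ∈ F, ∀ B ∈ F,
      (ε ^ A.card / ∑ D ∈ F, ε ^ D.card) * Pstep F ε A B =
        (ε ^ B.card / ∑ D ∈ F, ε ^ D.card) * Pstep F ε B A) ∧
    (∀ B ∈ F,
      ∑ A ∈ F, (ε ^ A.card / ∑ D ∈ F, ε ^ D.card) * Pstep F ε A B =
        ε ^ B.card / ∑ D ∈ F, ε ^ D.card) :=
  exploration_chain_stationary_general F hup ε hε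
end
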